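/- arXiv:2407.12756 — 2 statements merged into one kernel-verified Lean document; each statement's English description precedes it below -/
import Mathlib

section
/- Let n ≥ 2 and let λ_1 ≥ λ_2 ≥ ⋯ ≥ λ_n be real numbers satisfying ∑_{i=1}^n arctan λ_i ≥ (n−2)π/2. Then λ_1 + (n−1)λ_n ≥ 0. -/
open Real

lemma arctan_add_le {x y : ℝ} (hx : 0 ≤ x) (hy : 0 ≤ y) :
    Real.arctan (x + y) ≤ Real.arctan x + Real.arctan y := by
  rcases lt_or_ge (x * y) 1 with h | h
  · rw [Real.arctan_add h]
    apply Real.arctan_strictMono.monotone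
    have h1 : 0 < 1 - x * y := by linarith
    rw [le_div_iff₀ h1]
    nlinarith [mul_nonneg (mul_nonneg (add_nonneg hx hy) hx) hy]
  · have hy' : 0 < y := by nlinarith
    have hx' : y⁻¹ ≤ x := by
      rw [inv_le_iff_one_le_mul₀ hy']; nlinarith
    have h2 : Real.arctan y⁻¹ ≤ Real.arctan x := Real.arctan_strictMono.monotone hx'
    rw [Real.arctan_inv_of_pos hy'] at h2
    have := Real.arctan_lt_pi_div_two (x + y)
    linarith

lemma arctan_nat_mul_le (k : ℕ) {s : ℝ} (hs : 0 ≤ s) :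
    Real.arctan ((k : ℝ) * s) ≤ (k : ℝ) * Real.arctan s := by
  induction k with
  | zero => simp
  | succ m ih =>
    have h1 : Real.arctan ((m : ℝ) * s + s) ≤ Real.arctan ((m : ℝ) * s) + Real.arctan s :=
      arctan_add_le (by positivity) hs
    push_cast
    calc Real.arctan (((m : ℝ) + 1) * s) = Real.arctan ((m : ℝ) * s + s) := by ring_nf
      _ ≤ Real.arctan ((m : ℝ) * s) + Real.arctan s := h1
      _ ≤ (m : ℝ) * Real.arctan s + Real.arctan s := by linarith
      _ = ((m : ℝ) + 1) * Real.arctan s := by ring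

/-- Lemma 2.1(2): if `λ₁ ≥ ⋯ ≥ λₙ` satisfy `∑ arctan λᵢ ≥ (n-2)π/2` with `n ≥ 2`, then
`λ₁ + (n-1)λₙ ≥ 0`. (Indices are 0-based: `lam ⟨0,_⟩ = λ₁`, `lam ⟨n-1,_⟩ = λₙ`.) -/
theorem ordered_eigenvalues_supercritical_trace_bound
    (n : ℕ) (hn : 2 ≤ n) (lam : Fin n → ℝ)
    (hord : ∀ i j : Fin n, i ≤ j → lam j ≤ lam i)
    (hsum : ((n : ℝ) - 2) * π / 2 ≤ ∑ i, Real.arctan (lam i)) :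
    0 ≤ lam ⟨0, by omega⟩ + ((n : ℝ) - 1) * lam ⟨n - 1, by omega⟩ := by
  set i0 : Fin n := ⟨0, by omega⟩
  set iN : Fin n := ⟨n - 1, by omega⟩
  set a := lam i0
  set b := lam iN
  have hab : b ≤ a := hord i0 iN (by simp [i0, iN, Fin.le_def])
  have hncast : (2 : ℝ) ≤ (n : ℝ) := by exact_mod_cast hn
  have hn1 : (0 : ℝ) < (n : ℝ) - 1 := by linarith
  have hcast1 : ((n - 1 : ℕ) : ℝ) = (n : ℝ) - 1 := by
    push_cast [Nat.cast_sub (by omega : 1 ≤ n)]; ring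
  have hkey : ((n : ℝ) - 2) * π / 2 ≤ ((n : ℝ) - 1) * Real.arctan a + Real.arctan b := by
    have hsum2 : ∑ i ∈ Finset.univ.erase iN, Real.arctan (lam i)
        ≤ (Finset.univ.erase iN).card • Real.arctan a := by
      apply Finset.sum_le_card_nsmul
      intro i _
      exact Real.arctan_strictMono.monotone (hord i0 i (by simp [i0, Fin.le_def]))
    have hcard : (Finset.univ.erase iN).card = n - 1 := by
      rw [Finset.card_erase_of_mem (Finset.mem_univ _), Finset.card_univ, Fintype.card_fin]
    have hsplit : ∑ i, Real.arctan (lam i)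
        = Real.arctan b + ∑ i ∈ Finset.univ.erase iN, Real.arctan (lam i) :=
      (Finset.add_sum_erase _ _ (Finset.mem_univ iN)).symm
    rw [hcard, nsmul_eq_mul, hcast1] at hsum2
    rw [hsplit] at hsum
    linarith
  rcases le_or_gt 0 b with hb | hb
  · have ha : 0 ≤ a := le_trans hb hab
    nlinarith
  · have harctb : Real.arctan b < 0 := by
      rw [← Real.arctan_zero]; exact Real.arctan_strictMono hb
    have ha : 0 < Real.arctan a := by
      have hn2 : (0 : ℝ) ≤ ((n : ℝ) - 2) * π / 2 := by
        have := Real.pi_pos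
        have : (0 : ℝ) ≤ (n : ℝ) - 2 := by linarith
        positivity
      nlinarith
    have ha' : 0 < a := by
      by_contra h
      push_neg at h
      have : Real.arctan a ≤ 0 := by
        rw [← Real.arctan_zero]; exact Real.arctan_strictMono.monotone h
      linarith
    have hinv : Real.arctan a⁻¹ = π / 2 - Real.arctan a := Real.arctan_inv_of_pos ha'
    have hk : Real.arctan (((n : ℝ) - 1) * a⁻¹) ≤ ((n : ℝ) - 1) * Real.arctan a⁻¹ := by
      have := arctan_nat_mul_le (n - 1) (s := a⁻¹) (by positivity)
      rwa [hcast1] at this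
    have hpos : 0 < ((n : ℝ) - 1) * a⁻¹ := by positivity
    have hinv2 : Real.arctan (((n : ℝ) - 1) * a⁻¹)⁻¹
        = π / 2 - Real.arctan (((n : ℝ) - 1) * a⁻¹) := Real.arctan_inv_of_pos hpos
    have hmain : Real.arctan (-b) ≤ Real.arctan (((n : ℝ) - 1) * a⁻¹)⁻¹ := by
      rw [Real.arctan_neg, hinv2]
      have h1 : ((n : ℝ) - 1) * Real.arctan a⁻¹ = ((n : ℝ) - 1) * (π / 2 - Real.arctan a) := by
        rw [hinv]
      nlinarith [hk, hkey]
    have hle : -b ≤ (((n : ℝ) - 1) * a⁻¹)⁻¹ := by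
      by_contra h
      push_neg at h
      exact absurd (Real.arctan_strictMono h) (not_lt.mpr hmain)
    have hval : (((n : ℝ) - 1) * a⁻¹)⁻¹ = a / ((n : ℝ) - 1) := by
      field_simp
    rw [hval, div_eq_mul_inv] at hle
    nlinarith [mul_le_mul_of_nonneg_right hle hn1.le, mul_inv_cancel₀ hn1.ne']
end

section
/- Let n ≥ 2 and let λ_1 ≥ λ_2 ≥ ⋯ ≥ λ_n be real numbers satisfying ∑_{i=1}^n arctan λ_i ≥ (n−2)π/2. Then for every k with 1 ≤ k ≤ n−1, the k-th elementary symmetric polynomial satisfies σ_k(λ_1, …, λ_n) ≥ 0. -/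
open Real

lemma tan_add_le_of_nonneg {A B : ℝ} (hA : 0 ≤ A) (hB : 0 ≤ B) (hAB : A + B < π / 2) :
    Real.tan A + Real.tan B ≤ Real.tan (A + B) := by
  have hpi : 0 < π / 2 := by positivity
  have hcA : 0 < Real.cos A := Real.cos_pos_of_mem_Ioo ⟨by linarith, by linarith⟩
  have hcB : 0 < Real.cos B := Real.cos_pos_of_mem_Ioo ⟨by linarith, by linarith⟩
  have hcAB : 0 < Real.cos (A + B) := Real.cos_pos_of_mem_Ioo ⟨by linarith, hAB⟩
  have hsA : 0 ≤ Real.sin A := Real.sin_nonneg_of_nonneg_of_le_pi hA (by linarith [Real.pi_pos])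
  have hsB : 0 ≤ Real.sin B := Real.sin_nonneg_of_nonneg_of_le_pi hB (by linarith [Real.pi_pos])
  rw [Real.tan_eq_sin_div_cos, Real.tan_eq_sin_div_cos, Real.tan_eq_sin_div_cos,
    div_add_div _ _ hcA.ne' hcB.ne', div_le_div_iff₀ (by positivity) hcAB]
  have key : Real.sin (A + B) * (Real.cos A * Real.cos B)
      - (Real.sin A * Real.cos B + Real.cos A * Real.sin B) * Real.cos (A + B)
      = (Real.sin A * Real.cos B + Real.cos A * Real.sin B) * (Real.sin A * Real.sin B) := by
    rw [Real.sin_add, Real.cos_add]; ring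
  nlinarith [mul_nonneg (add_nonneg (mul_nonneg hsA hcB.le) (mul_nonneg hcA.le hsB))
    (mul_nonneg hsA hsB)]

lemma tan_superadd {ι : Type*} (s : Finset ι) (f : ι → ℝ)
    (h0 : ∀ i ∈ s, 0 ≤ f i) (hs : ∑ i ∈ s, f i < π / 2) :
    ∑ i ∈ s, Real.tan (f i) ≤ Real.tan (∑ i ∈ s, f i) := by
  induction s using Finset.cons_induction with
  | empty => simp
  | cons a t ha ih =>
    rw [Finset.sum_cons, Finset.sum_cons]
    rw [Finset.sum_cons] at hs
    have hA : 0 ≤ f a := h0 a (Finset.mem_cons_self a t)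
    have hB : 0 ≤ ∑ i ∈ t, f i :=
      Finset.sum_nonneg fun i hi => h0 i (Finset.mem_cons_of_mem hi)
    have ih' := ih (fun i hi => h0 i (Finset.mem_cons_of_mem hi)) (by linarith)
    have := tan_add_le_of_nonneg hA hB hs
    linarith

/-- Lemma 2.1(3): if `λ₁ ≥ ⋯ ≥ λₙ` satisfy `∑ arctan λᵢ ≥ (n-2)π/2` with `n ≥ 2`, then
the elementary symmetric polynomials satisfy `σ_k(λ) ≥ 0` for all `1 ≤ k ≤ n-1`. -/
theorem ordered_eigenvalues_supercritical_esymm_nonneg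
    (n : ℕ) (hn : 2 ≤ n) (lam : Fin n → ℝ)
    (hord : ∀ i j : Fin n, i ≤ j → lam j ≤ lam i)
    (hsum : ((n : ℝ) - 2) * π / 2 ≤ ∑ i, Real.arctan (lam i)) :
    ∀ k : ℕ, 1 ≤ k → k ≤ n - 1 →
      0 ≤ ∑ S ∈ Finset.powersetCard k (Finset.univ : Finset (Fin n)), ∏ i ∈ S, lam i := by
  intro k hk1 hkn
  have hqlt : n - 1 < n := by omega
  set q : Fin n := ⟨n - 1, hqlt⟩ with hqdef
  have hle : ∀ i : Fin n, i ≤ q := by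
    intro i
    have := i.isLt
    rw [Fin.le_def]
    simp only [hqdef]
    omega
  by_cases hql : 0 ≤ lam q
  · exact Finset.sum_nonneg fun S _ => Finset.prod_nonneg fun i _ =>
      le_trans hql (hord i q (hle i))
  push_neg at hql
  set θ : Fin n → ℝ := fun i => Real.arctan (lam i) with hθ
  have hθq_neg : θ q < 0 := by
    have : Real.arctan (lam q) < Real.arctan 0 := Real.arctan_strictMono hql
    simpa [hθ] using this
  set E : Finset (Fin n) := Finset.univ.erase q with hE
  have hqE : q ∉ E := Finset.notMem_erase _ _
  have hEcard : E.card = n - 1 := by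
    rw [hE, Finset.card_erase_of_mem (Finset.mem_univ q), Finset.card_univ, Fintype.card_fin]
  have hins : insert q E = Finset.univ := Finset.insert_erase (Finset.mem_univ q)
  have hθlt : ∀ i, θ i < π / 2 := fun i => Real.arctan_lt_pi_div_two _
  have hθgt : ∀ i, -(π / 2) < θ i := fun i => Real.neg_pi_div_two_lt_arctan _
  -- sum over univ splits
  have hsplitq : ∑ j, θ j = θ q + ∑ j ∈ E, θ j := by
    rw [hE, Finset.add_sum_erase _ _ (Finset.mem_univ q)]
  -- positivity on E
  have hpos : ∀ i ∈ E, 0 < lam i := by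
    intro i hi
    have hθi : 0 < θ i := by
      have hsplit2 : ∑ j ∈ E, θ j = θ i + ∑ j ∈ E.erase i, θ j :=
        (Finset.add_sum_erase _ _ hi).symm
      have hcard2 : (E.erase i).card = n - 2 := by
        rw [Finset.card_erase_of_mem hi, hEcard]; omega
      have hbd : ∑ j ∈ E.erase i, θ j ≤ ((n : ℝ) - 2) * (π / 2) := by
        have := Finset.sum_le_card_nsmul (E.erase i) θ (π / 2)
          (fun j _ => (hθlt j).le)
        rw [hcard2, nsmul_eq_mul] at this
        have hc : ((n - 2 : ℕ) : ℝ) = (n : ℝ) - 2 := by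
          push_cast [Nat.cast_sub hn]; ring
        rw [hc] at this
        exact this
      have : ((n : ℝ) - 2) * π / 2 ≤ θ q + (θ i + ∑ j ∈ E.erase i, θ j) := by
        rw [← hsplit2, ← hsplitq]; exact hsum
      have hn2 : ((n : ℝ) - 2) * π / 2 = ((n : ℝ) - 2) * (π / 2) := by ring
      linarith [this, hbd, hθq_neg]
    have h0 : Real.arctan 0 < Real.arctan (lam i) := by
      rw [Real.arctan_zero]; exact hθi
    exact Real.arctan_strictMono.lt_iff_lt.mp h0
  -- the quantity S
  set T : ℝ := ∑ i ∈ E, (π / 2 - θ i) with hT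
  have hEne : E.Nonempty := Finset.card_pos.mp (by omega)
  have hsumE : ∑ i ∈ E, θ i = ((n : ℝ) - 1) * (π / 2) - T := by
    rw [hT, Finset.sum_sub_distrib, Finset.sum_const, hEcard, nsmul_eq_mul]
    have hc : ((n - 1 : ℕ) : ℝ) = (n : ℝ) - 1 := by push_cast [Nat.cast_sub (by omega : 1 ≤ n)]; ring
    rw [hc]; ring
  have hθq_ge : T - π / 2 ≤ θ q := by
    have := hsum
    rw [hsplitq, hsumE] at this
    linarith
  have hT_lt : T < π / 2 := by linarith
  have hT_pos : 0 < T := by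
    refine Finset.sum_pos (fun i _ => by linarith [hθlt i]) hEne
  have htanT_pos : 0 < Real.tan T := Real.tan_pos_of_pos_of_lt_pi_div_two hT_pos hT_lt
  -- harmonic sum bound
  have hinv_eq : ∀ i ∈ E, (lam i)⁻¹ = Real.tan (π / 2 - θ i) := by
    intro i hi
    rw [Real.tan_pi_div_two_sub, hθ]
    simp
  have hH_le : ∑ i ∈ E, (lam i)⁻¹ ≤ Real.tan T := by
    have hsup := tan_superadd E (fun i => π / 2 - θ i)
      (fun i hi => by linarith [hθlt i]) (by rw [← hT]; exact hT_lt)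
    calc ∑ i ∈ E, (lam i)⁻¹ = ∑ i ∈ E, Real.tan (π / 2 - θ i) :=
          Finset.sum_congr rfl hinv_eq
      _ ≤ Real.tan T := by rw [hT]; exact hsup
  have hH_nonneg : 0 ≤ ∑ i ∈ E, (lam i)⁻¹ :=
    Finset.sum_nonneg fun i hi => (inv_pos.mpr (hpos i hi)).le
  have hlamq_le : -lam q ≤ (Real.tan T)⁻¹ := by
    have h1 : -lam q = Real.tan (-θ q) := by
      rw [Real.tan_neg, hθ]; simp
    rw [h1, ← Real.tan_pi_div_two_sub]
    refine Real.strictMonoOn_tan.monotoneOn ?_ ?_ (by linarith)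
    · exact ⟨by linarith [hθlt q], by linarith [hθgt q]⟩
    · exact ⟨by linarith [Real.pi_pos], by linarith⟩
  have hkey : (-lam q) * ∑ i ∈ E, (lam i)⁻¹ ≤ 1 := by
    calc (-lam q) * ∑ i ∈ E, (lam i)⁻¹ ≤ (Real.tan T)⁻¹ * Real.tan T :=
          mul_le_mul hlamq_le hH_le hH_nonneg (inv_nonneg.mpr htanT_pos.le)
      _ = 1 := inv_mul_cancel₀ htanT_pos.ne'
  -- combinatorics
  obtain ⟨m, rfl⟩ : ∃ m, k = m + 1 := ⟨k - 1, by omega⟩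
  have hsubE : ∀ {j : ℕ} {t : Finset (Fin n)}, t ∈ E.powersetCard j → t ⊆ E ∧ t.card = j :=
    fun ht => Finset.mem_powersetCard.mp ht
  have hσnonneg : ∀ j : ℕ, 0 ≤ ∑ t ∈ E.powersetCard j, ∏ i ∈ t, lam i := by
    intro j
    refine Finset.sum_nonneg fun t ht => Finset.prod_nonneg fun i hi => ?_
    exact (hpos i ((hsubE ht).1 hi)).le
  -- recursion
  have hrec : ∑ S ∈ Finset.powersetCard (m + 1) (Finset.univ : Finset (Fin n)), ∏ i ∈ S, lam i
      = (∑ t ∈ E.powersetCard (m + 1), ∏ i ∈ t, lam i)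
        + lam q * ∑ t ∈ E.powersetCard m, ∏ i ∈ t, lam i := by
    rw [← hins, Finset.powersetCard_succ_insert hqE, Finset.sum_union, Finset.sum_image]
    · congr 1
      rw [Finset.mul_sum]
      refine Finset.sum_congr rfl fun t ht => ?_
      have hqt : q ∉ t := fun h => hqE ((hsubE ht).1 h)
      rw [Finset.prod_insert hqt]
    · intro x hx y hy hxy
      have hqx : q ∉ x := fun h => hqE ((hsubE hx).1 h)
      have hqy : q ∉ y := fun h => hqE ((hsubE hy).1 h)
      rw [← Finset.erase_insert hqx, ← Finset.erase_insert hqy, hxy]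
    · rw [Finset.disjoint_left]
      intro t ht htimg
      obtain ⟨s, hs, rfl⟩ := Finset.mem_image.mp htimg
      exact (fun h => hqE ((hsubE ht).1 h)) (Finset.mem_insert_self q s)
  -- key combinatorial inequality
  have hstep : ∑ t ∈ E.powersetCard m, ∏ i ∈ t, lam i
      ≤ (∑ i ∈ E, (lam i)⁻¹) * ∑ t ∈ E.powersetCard (m + 1), ∏ i ∈ t, lam i := by
    set F : Fin n × Finset (Fin n) → ℝ := fun p => (lam p.1)⁻¹ * ∏ i ∈ p.2, lam i with hF
    have hRHS : (∑ i ∈ E, (lam i)⁻¹) * ∑ t ∈ E.powersetCard (m + 1), ∏ i ∈ t, lam i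
        = ∑ p ∈ E ×ˢ E.powersetCard (m + 1), F p := by
      rw [Finset.sum_product, Finset.sum_mul]
      exact Finset.sum_congr rfl fun i _ => by rw [Finset.mul_sum]
    have hne : ∀ t ∈ E.powersetCard m, (E \ t).Nonempty := by
      intro t ht
      obtain ⟨hts, htc⟩ := hsubE ht
      rw [← Finset.card_pos, Finset.card_sdiff_of_subset hts, htc, hEcard]
      omega
    set g : Finset (Fin n) → Fin n × Finset (Fin n) := fun t =>
      if h : (E \ t).Nonempty then ((E \ t).min' h, insert ((E \ t).min' h) t)
      else (q, t) with hg
    have hgval : ∀ t (ht : t ∈ E.powersetCard m),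
        g t = ((E \ t).min' (hne t ht), insert ((E \ t).min' (hne t ht)) t) := by
      intro t ht
      rw [hg]
      simp [dif_pos (hne t ht)]
    have hjmem : ∀ t (h : (E \ t).Nonempty),
        (E \ t).min' h ∈ E ∧ (E \ t).min' h ∉ t := by
      intro t h
      have := Finset.min'_mem (E \ t) h
      rw [Finset.mem_sdiff] at this
      exact this
    have hmem : ∀ t ∈ E.powersetCard m, g t ∈ E ×ˢ E.powersetCard (m + 1) := by
      intro t ht
      rw [hgval t ht, Finset.mem_product]
      obtain ⟨hts, htc⟩ := hsubE ht
      obtain ⟨hj1, hj2⟩ := hjmem t (hne t ht)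
      refine ⟨hj1, Finset.mem_powersetCard.mpr ⟨?_, ?_⟩⟩
      · exact Finset.insert_subset hj1 hts
      · rw [Finset.card_insert_of_notMem hj2, htc]
    have hval : ∀ t ∈ E.powersetCard m, F (g t) = ∏ i ∈ t, lam i := by
      intro t ht
      rw [hgval t ht, hF]
      obtain ⟨hj1, hj2⟩ := hjmem t (hne t ht)
      simp only
      rw [Finset.prod_insert hj2, ← mul_assoc, inv_mul_cancel₀ (hpos _ hj1).ne', one_mul]
    have hinj : ∀ x ∈ E.powersetCard m, ∀ y ∈ E.powersetCard m, g x = g y → x = y := by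
      intro x hx y hy hxy
      rw [hgval x hx, hgval y hy, Prod.mk.injEq] at hxy
      obtain ⟨h1, h2⟩ := hxy
      obtain ⟨_, hjx⟩ := hjmem x (hne x hx)
      obtain ⟨_, hjy⟩ := hjmem y (hne y hy)
      rw [← Finset.erase_insert hjx, h2, h1, Finset.erase_insert hjy]
    calc ∑ t ∈ E.powersetCard m, ∏ i ∈ t, lam i
        = ∑ t ∈ E.powersetCard m, F (g t) := Finset.sum_congr rfl fun t ht => (hval t ht).symm
      _ = ∑ p ∈ (E.powersetCard m).image g, F p := (Finset.sum_image hinj).symm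
      _ ≤ ∑ p ∈ E ×ˢ E.powersetCard (m + 1), F p := by
          refine Finset.sum_le_sum_of_subset_of_nonneg ?_ ?_
          · intro p hp
            obtain ⟨t, ht, rfl⟩ := Finset.mem_image.mp hp
            exact hmem t ht
          · intro p hp _
            rw [Finset.mem_product] at hp
            refine mul_nonneg (inv_nonneg.mpr (hpos _ hp.1).le) ?_
            exact Finset.prod_nonneg fun i hi =>
              (hpos i ((Finset.mem_powersetCard.mp hp.2).1 hi)).le
      _ = (∑ i ∈ E, (lam i)⁻¹) * ∑ t ∈ E.powersetCard (m + 1), ∏ i ∈ t, lam i := hRHS.symm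
  -- conclude
  rw [hrec]
  have h1 : (-lam q) * (∑ t ∈ E.powersetCard m, ∏ i ∈ t, lam i)
      ≤ (-lam q) * ((∑ i ∈ E, (lam i)⁻¹) * ∑ t ∈ E.powersetCard (m + 1), ∏ i ∈ t, lam i) :=
    mul_le_mul_of_nonneg_left hstep (by linarith)
  have h2 : ((-lam q) * ∑ i ∈ E, (lam i)⁻¹) * (∑ t ∈ E.powersetCard (m + 1), ∏ i ∈ t, lam i)
      ≤ 1 * ∑ t ∈ E.powersetCard (m + 1), ∏ i ∈ t, lam i :=
    mul_le_mul_of_nonneg_right hkey (hσnonneg (m + 1))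
  nlinarith [hσnonneg (m + 1), hσnonneg m]
end
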